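/- Let U be a finite set, and for each u ∈ U let δ_u > 0, S_u ≥ 0, and I_u > 0 be real numbers. Then the supremum over all γ : U → ℝ with γ_u ≥ 0 of f₁(γ) = ∑_{u∈U} [δ_u·(log(1+γ_u) − γ_u) + δ_u·(1+γ_u)·S_u/(S_u+I_u)] equals the weighted sum rate ∑_{u∈U} δ_u·log(1 + S_u/I_u), and it is attained exactly at γ_u = S_u/I_u for every u. -/

import Mathlib

/-! Per user, with `x = (1 + γ) I / (S + I)` the term of `f₁` falls short of the rate
`log (1 + S / I)` by exactly `x - 1 - log x`, which is `≥ 0` and vanishes only at `x = 1`,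
i.e. at `γ = S / I`. Summing with positive weights gives the bound and its equality case. -/

open Real Finset

noncomputable def dualRateTerm (S I t : ℝ) : ℝ :=
  log (1 + t) - t + (1 + t) * S / (S + I)

section DualRateTerm

variable {S I t : ℝ}

lemma dualRateTerm_sub_log_eq (hI : 0 < I) (hSI : 0 < S + I) (ht : 0 < 1 + t) :
    dualRateTerm S I t - log (1 + S / I)
      = log ((1 + t) * I / (S + I)) - ((1 + t) * I / (S + I) - 1) := by
  have h_rate : 1 + S / I = (S + I) / I := by field_simp; ring
  rw [dualRateTerm, h_rate, log_div hSI.ne' hI.ne', log_div (by positivity) hSI.ne',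
    log_mul ht.ne' hI.ne']
  field_simp
  ring

lemma dualRateTerm_le_log (hI : 0 < I) (hSI : 0 < S + I) (ht : 0 < 1 + t) :
    dualRateTerm S I t ≤ log (1 + S / I) := by
  have h_gap := dualRateTerm_sub_log_eq hI hSI ht
  have h_log := log_le_sub_one_of_pos (show 0 < (1 + t) * I / (S + I) by positivity)
  linarith

lemma dualRateTerm_eq_log_iff (hI : 0 < I) (hSI : 0 < S + I) (ht : 0 < 1 + t) :
    dualRateTerm S I t = log (1 + S / I) ↔ t = S / I := by
  have h_gap := dualRateTerm_sub_log_eq hI hSI ht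
  have hx : 0 < (1 + t) * I / (S + I) := by positivity
  have h_x_eq_one : (1 + t) * I / (S + I) = 1 ↔ t = S / I := by
    rw [div_eq_one_iff_eq hSI.ne', eq_div_iff hI.ne']
    constructor <;> intro h <;> linarith
  rw [← h_x_eq_one]
  constructor
  · intro h_eq
    by_contra hne
    linarith [log_lt_sub_one_of_pos hx hne]
  · intro h_one
    rw [h_one, log_one] at h_gap
    linarith

end DualRateTerm

/-- Equivalence of the weighted-sum-rate problem and its Lagrangian-dual reformulation
for fixed beamformers: the supremum of
`f₁(γ) = ∑ u, δ_u (log(1+γ_u) − γ_u) + δ_u (1+γ_u) S_u/(S_u+I_u)` over nonnegative `γ`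
equals the weighted sum rate `∑ u, δ_u log(1 + S_u/I_u)`, attained exactly at
`γ_u = S_u/I_u`. -/
theorem dual_reformulation_sup (U : Type*) [Fintype U]
    (δ S I : U → ℝ) (hδ : ∀ u, 0 < δ u) (hS : ∀ u, 0 ≤ S u) (hI : ∀ u, 0 < I u)
    (f : (U → ℝ) → ℝ)
    (hf : ∀ γ : U → ℝ, f γ = ∑ u, (δ u * (Real.log (1 + γ u) - γ u)
        + δ u * (1 + γ u) * S u / (S u + I u))) :
    IsGreatest {y : ℝ | ∃ γ : U → ℝ, (∀ u, 0 ≤ γ u) ∧ f γ = y}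
      (∑ u, δ u * Real.log (1 + S u / I u)) ∧
    (∀ γ : U → ℝ, (∀ u, 0 ≤ γ u) →
      (f γ = ∑ u, δ u * Real.log (1 + S u / I u) ↔ γ = fun u => S u / I u)) := by
  have hSI u : 0 < S u + I u := by linarith [hS u, hI u]
  have hf' (γ : U → ℝ) : f γ = ∑ u, δ u * dualRateTerm (S u) (I u) (γ u) := by
    rw [hf]; congr! 1 with u; rw [dualRateTerm]; ring
  have h_le (γ : U → ℝ) (hγ : ∀ u, 0 ≤ γ u) u :
      δ u * dualRateTerm (S u) (I u) (γ u) ≤ δ u * log (1 + S u / I u) :=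
    mul_le_mul_of_nonneg_left (dualRateTerm_le_log (hI u) (hSI u) (by linarith [hγ u]))
      (hδ u).le
  have h_eq_iff (γ : U → ℝ) (hγ : ∀ u, 0 ≤ γ u) :
      f γ = ∑ u, δ u * log (1 + S u / I u) ↔ γ = fun u => S u / I u := by
    rw [hf', sum_eq_sum_iff_of_le fun u _ => h_le γ hγ u, funext_iff]
    simp only [mem_univ, true_imp_iff]
    refine forall_congr' fun u => ?_
    rw [mul_right_inj' (hδ u).ne', dualRateTerm_eq_log_iff (hI u) (hSI u) (by linarith [hγ u])]
  have h_opt_nonneg u : 0 ≤ S u / I u := div_nonneg (hS u) (hI u).le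
  refine ⟨⟨⟨_, h_opt_nonneg, (h_eq_iff _ h_opt_nonneg).2 rfl⟩, ?_⟩, h_eq_iff⟩
  rintro y ⟨γ, hγ, rfl⟩
  rw [hf']
  exact sum_le_sum fun u _ => h_le γ hγ u
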